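/- arXiv:1602.04514 — 2 statements merged into one kernel-verified Lean document; each statement's English description precedes it below -/
import Mathlib

section
/- Let f and g be character combination sequences with the same prime p. Then (1/(p(p−1)))·Σ_{a∈F_p} |PC_{per(f),per(g)}(a)|² = S_{f,g} + 1 + U_{f,g} + V_{f,g}. Moreover, if f = g, then S_{f,f} + 1 + U_{f,f} + V_{f,f} = S_{f,f} + 2 + V_{f,f} ≥ 1. -/
open scoped BigOperators Classical ComplexOrder

noncomputable section

namespace Paper

/-- `Ω(x,y) = Σ_{n ∈ ℤ} max(0, 1 − |n·x − y|)²`. -/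
def Omega (x y : ℝ) : ℝ := ∑' n : ℤ, max 0 (1 - |(n : ℝ) * x - y|) ^ 2

/-- The extension of a finite sequence of length `ℓ` by zero to all of `ℤ`. -/
def ext (ℓ : ℕ) (f : ℕ → ℂ) (j : ℤ) : ℂ :=
  if 0 ≤ j ∧ j < (ℓ : ℤ) then f j.toNat else 0

/-- Aperiodic crosscorrelation `C_{f,g}(s)` of two sequences of length `ℓ` at shift `s`. -/
def XC (ℓ : ℕ) (f g : ℕ → ℂ) (s : ℤ) : ℂ :=
  ∑' j : ℤ, ext ℓ f j * (starRingEnd ℂ) (ext ℓ g (j + s))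

/-- Crosscorrelation demerit factor `CDF(f,g)`. -/
def CDF (ℓ : ℕ) (f g : ℕ → ℂ) : ℝ :=
  (∑' s : ℤ, norm (XC ℓ f g s) ^ 2) /
    (norm (XC ℓ f f 0) * norm (XC ℓ g g 0))

/-- Autocorrelation demerit factor `DF(f) = CDF(f,f) − 1`. -/
def DF (ℓ : ℕ) (f : ℕ → ℂ) : ℝ := CDF ℓ f f - 1

/-- `u` is a unimodularization of the length-`ℓ` sequence `f`: it agrees with `f` at
nonzero terms and replaces each zero term by a complex number of modulus `1`. -/
def IsUnimodularization (ℓ : ℕ) (f u : ℕ → ℂ) : Prop :=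
  ∀ j < ℓ, (f j ≠ 0 → u j = f j) ∧ (f j = 0 → norm (u j) = 1)

/-- The multiplicative characters of `F_p = ZMod p`, extended by `χ(0) = 0`. -/
abbrev MChar (p : ℕ) := MulChar (ZMod p) ℂ

instance (p : ℕ) [Fact p.Prime] : Fintype (MChar p) := Fintype.ofFinite _

/-- The Gauss sum `τ(χ) = Σ_{x ∈ F_p} e^{2πi x / p} χ(x)` (note `χ(0) = 0`). -/
def gauss (p : ℕ) [Fact p.Prime] (χ : MChar p) : ℂ :=
  ∑ x : ZMod p, Complex.exp (2 * Real.pi * Complex.I * (x.val : ℂ) / (p : ℂ)) * χ x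

/-- The quadratic character `η` of `F_p`, with values in `ℂ`. -/
def quadChar (p : ℕ) [Fact p.Prime] : MChar p :=
  (quadraticChar (ZMod p)).ringHomComp (Int.castRingHom ℂ)

/-- `c` is a character combination: the coefficient of the trivial character vanishes and
the sum of the squared magnitudes of the coefficients is `1`. -/
def IsCharCombo (p : ℕ) [Fact p.Prime] (c : MChar p → ℂ) : Prop :=
  c 1 = 0 ∧ ∑ χ : MChar p, norm (c χ) ^ 2 = 1

/-- The function `F(a) = Σ_χ f_χ · χ(a)` attached to a character combination. -/
def combFun (p : ℕ) [Fact p.Prime] (c : MChar p → ℂ) (a : ZMod p) : ℂ :=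
  ∑ χ : MChar p, c χ * χ a

/-- The character combination sequence with shift `s`: its `j`-th term is `F(s + j)`. -/
def combSeq (p : ℕ) [Fact p.Prime] (c : MChar p → ℂ) (s : ℤ) : ℕ → ℂ :=
  fun j => combFun p c (((s + (j : ℤ)) : ℤ) : ZMod p)

/-- A character combination is unimodularizable when `|F(a)| = 1` for all `a ≠ 0`. -/
def Unimodularizable (p : ℕ) [Fact p.Prime] (c : MChar p → ℂ) : Prop :=
  ∀ a : ZMod p, a ≠ 0 → norm (combFun p c a) = 1

/-- The parameter `S_{f,g}` of a pair of character combination sequences. -/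
def Sparam (p : ℕ) [Fact p.Prime] (c d : MChar p → ℂ) : ℂ :=
  (∑ φ : MChar p, ∑ χ : MChar p, ∑ ψ : MChar p, ∑ ω : MChar p,
      if φ * χ = ψ * ω ∧ φ ≠ χ⁻¹ ∧ φ ≠ ψ ∧ φ ≠ ω then
        c φ * d χ * (starRingEnd ℂ) (c ψ * d ω) *
          (gauss p φ * gauss p χ * (starRingEnd ℂ) (gauss p ψ * gauss p ω)) / (p : ℂ) ^ 2
      else 0)
    - ((∑ φ : MChar p, norm (c φ * d φ) ^ 2 : ℝ) : ℂ)
    - ((∑ φ : MChar p, norm (c φ * d φ⁻¹) ^ 2 : ℝ) : ℂ)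
    - ∑ φ : MChar p, c φ * (starRingEnd ℂ) (c φ⁻¹) * d φ⁻¹ * (starRingEnd ℂ) (d φ)
    + ((norm (c (quadChar p) * d (quadChar p)) ^ 2 : ℝ) : ℂ)

/-- The parameter `S_{f,f}` of a single character combination sequence. -/
def SparamAuto (p : ℕ) [Fact p.Prime] (c : MChar p → ℂ) : ℂ :=
  (∑ φ : MChar p, ∑ χ : MChar p, ∑ ψ : MChar p, ∑ ω : MChar p,
      if φ * χ = ψ * ω ∧ φ ≠ χ⁻¹ ∧ φ ≠ ψ ∧ φ ≠ ω then
        c φ * c χ * (starRingEnd ℂ) (c ψ * c ω) *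
          (gauss p φ * gauss p χ * (starRingEnd ℂ) (gauss p ψ * gauss p ω)) / (p : ℂ) ^ 2
      else 0)
    - 2 * ((∑ φ : MChar p, norm (c φ * c φ⁻¹) ^ 2 : ℝ) : ℂ)
    - ((∑ φ : MChar p, norm (c φ) ^ 4 : ℝ) : ℂ)
    + ((norm (c (quadChar p)) ^ 4 : ℝ) : ℂ)

/-- The parameter `U_{f,g}`. -/
def Uparam (p : ℕ) [Fact p.Prime] (c d : MChar p → ℂ) : ℝ :=
  norm (∑ φ : MChar p, c φ * (starRingEnd ℂ) (d φ)) ^ 2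

/-- The parameter `V_{f,g}`. -/
def Vparam (p : ℕ) [Fact p.Prime] (c d : MChar p → ℂ) : ℝ :=
  norm (∑ φ : MChar p, c φ * d φ⁻¹ * φ (-1)) ^ 2

/-- The parameter `W_f`. -/
def Wparam (p : ℕ) [Fact p.Prime] (c : MChar p → ℂ) : ℝ :=
  ∑ φ : MChar p, norm (c φ)

/-- Periodic crosscorrelation of two periodic sequences of period `n` at shift `s`. -/
def PC (n : ℕ) [NeZero n] (u v : ZMod n → ℂ) (s : ZMod n) : ℂ :=
  ∑ j : ZMod n, u j * (starRingEnd ℂ) (v (j + s))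

/-- Fourier transform `û_a = Σ_x u_x e^{2πi a x / n}` of a periodic sequence of period `n`. -/
def FT (n : ℕ) [NeZero n] (u : ZMod n → ℂ) (a : ZMod n) : ℂ :=
  ∑ x : ZMod n, u x * Complex.exp (2 * Real.pi * Complex.I * ((a.val : ℂ) * (x.val : ℂ)) / (n : ℂ))

/-- `α` is a primitive element of `F_p`, i.e. a generator of the unit group. -/
def IsPrimitive (p : ℕ) (α : (ZMod p)ˣ) : Prop :=
  ∀ x : (ZMod p)ˣ, x ∈ Subgroup.zpowers α

/-- The subgroup `F_p^{*2m}` of `2m`-th powers in the unit group of `F_p`. -/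
def powSubgroup (p m : ℕ) : Subgroup (ZMod p)ˣ :=
  (powMonoidHom (2 * m) : (ZMod p)ˣ →* (ZMod p)ˣ).range

/-- The quotient group `F_p^* / F_p^{*2m}` of `2m`-th power residue classes. -/
abbrev ResCosets (p m : ℕ) := (ZMod p)ˣ ⧸ powSubgroup p m

/-- The function `F_{p,𝒜}`: `0` at `0`, `+1` on the union of the cosets in `𝒜`,
`−1` on the remaining nonzero elements. -/
def resFun (p m : ℕ) (A : Finset (ResCosets p m)) (j : ZMod p) : ℂ :=
  if h : IsUnit j then (if (QuotientGroup.mk h.unit : ResCosets p m) ∈ A then 1 else -1) else 0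

/-- The sequence of a `2m`-th residue class construction, with shift `s`. -/
def resSeq (p m : ℕ) (A : Finset (ResCosets p m)) (s : ℤ) : ℕ → ℂ :=
  fun j => resFun p m A (((s + (j : ℤ)) : ℤ) : ZMod p)

/-- The character combination coefficients of a `2m`-th residue class sequence:
`f_χ = (1/m) Σ_{A ∈ 𝒜} χ̄(A)` for nontrivial `χ` in the subgroup `Θ_p` of order `2m`
(characterized by `χ^{2m} = 1`), and `f_χ = 0` otherwise; `χ̄(A)` is evaluated at a
representative of the coset `A`, on which `χ̄` is constant. -/
def resCoef (p m : ℕ) [Fact p.Prime] (A : Finset (ResCosets p m)) (χ : MChar p) : ℂ :=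
  if χ ≠ 1 ∧ χ ^ (2 * m) = 1 then
    (1 / (m : ℂ)) * ∑ B ∈ A, χ⁻¹ ((B.out : (ZMod p)ˣ) : ZMod p)
  else 0

/-- The image of the coset `B` under multiplication by `−1`. -/
def negCoset (p m : ℕ) (B : ResCosets p m) : ResCosets p m :=
  QuotientGroup.mk ((-1 : (ZMod p)ˣ) * B.out)

/-- The quadratic residue function `H̃_p`: `+1` on `F_p^{*2}`, `−1` on `α F_p^{*2}`,
and `0` at `0`. -/
def Htilde (p : ℕ) (α : (ZMod p)ˣ) (x : ZMod p) : ℂ :=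
  if ∃ y : (ZMod p)ˣ, x = ((y ^ 2 : (ZMod p)ˣ) : ZMod p) then 1
  else if ∃ y : (ZMod p)ˣ, x = ((α * y ^ 2 : (ZMod p)ˣ) : ZMod p) then -1
  else 0

/-- The quartic residue function `F̃_p`: `+1` on `F_p^{*4} ∪ αF_p^{*4}`,
`−1` on `α²F_p^{*4} ∪ α³F_p^{*4}`, and `0` at `0`. -/
def Ftilde (p : ℕ) (α : (ZMod p)ˣ) (x : ZMod p) : ℂ :=
  if (∃ y : (ZMod p)ˣ, x = ((y ^ 4 : (ZMod p)ˣ) : ZMod p)) ∨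
      (∃ y : (ZMod p)ˣ, x = ((α * y ^ 4 : (ZMod p)ˣ) : ZMod p)) then 1
  else if (∃ y : (ZMod p)ˣ, x = ((α ^ 2 * y ^ 4 : (ZMod p)ˣ) : ZMod p)) ∨
      (∃ y : (ZMod p)ˣ, x = ((α ^ 3 * y ^ 4 : (ZMod p)ˣ) : ZMod p)) then -1
  else 0

/-- The quartic residue function `G̃_p`: `+1` on `F_p^{*4} ∪ α³F_p^{*4}`,
`−1` on `αF_p^{*4} ∪ α²F_p^{*4}`, and `0` at `0`. -/
def Gtilde (p : ℕ) (α : (ZMod p)ˣ) (x : ZMod p) : ℂ :=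
  if (∃ y : (ZMod p)ˣ, x = ((y ^ 4 : (ZMod p)ˣ) : ZMod p)) ∨
      (∃ y : (ZMod p)ˣ, x = ((α ^ 3 * y ^ 4 : (ZMod p)ˣ) : ZMod p)) then 1
  else if (∃ y : (ZMod p)ˣ, x = ((α * y ^ 4 : (ZMod p)ˣ) : ZMod p)) ∨
      (∃ y : (ZMod p)ˣ, x = ((α ^ 2 * y ^ 4 : (ZMod p)ˣ) : ZMod p)) then -1
  else 0

/-- The quadratic residue sequence `h̃_p^{s,ℓ}` (as a function; the length is used
in the correlation functionals). -/
def hSeq (p : ℕ) (α : (ZMod p)ˣ) (s : ℤ) : ℕ → ℂ :=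
  fun j => Htilde p α (((s + (j : ℤ)) : ℤ) : ZMod p)

/-- The quartic residue sequence `f̃_p^{s,ℓ}`. -/
def fSeq (p : ℕ) (α : (ZMod p)ˣ) (s : ℤ) : ℕ → ℂ :=
  fun j => Ftilde p α (((s + (j : ℤ)) : ℤ) : ZMod p)

/-- The quartic residue sequence `g̃_p^{s,ℓ}`. -/
def gSeq (p : ℕ) (α : (ZMod p)ˣ) (s : ℤ) : ℕ → ℂ :=
  fun j => Gtilde p α (((s + (j : ℤ)) : ℤ) : ZMod p)

/-
The Fourier transform turns the periodic correlation into `F̂ · conj Ĝ`, so by Parseval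
`p · Σ_a |PC(a)|² = Σ_t |F̂(t)|² |Ĝ(t)|²`. As `f_{χ₀} = 0`, the transform of a character
combination is `F̂(t) = Σ_φ f_φ τ(φ) φ̄(t)`, and orthogonality of multiplicative characters turns
`Σ_t |F̂(t) Ĝ(t)|²` into `p - 1` times the sum over the quadruples with `φχ = ψω`. The degenerate
quadruples (`φ = χ̄`, `φ = ψ` or `φ = ω`) are evaluated by inclusion–exclusion using
`|τ(φ)|² = p` and `τ(φ) τ(φ̄) = φ(-1) p`: they contribute `1 + U + V` and the correction terms
of `S`. For `f = g` we have `U = 1`, and `Σ_a |PC(a)|² ≥ p (p - 1)` by Cauchy–Schwarz over the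
nonzero frequencies, because `F̂(0) = Σ_a F(a) = 0` and `Σ_t |F̂(t)|² = p (p - 1)`.
-/

open Finset ComplexConjugate

lemma ite_eq_inclusion_exclusion {M : Type*} [AddCommGroup M] (P A B C : Prop) [Decidable P]
    [Decidable A] [Decidable B] [Decidable C] (x : M) :
    (if P then x else 0)
      = (if P ∧ ¬A ∧ ¬B ∧ ¬C then x else 0) + (if P ∧ A then x else 0)
        + (if P ∧ B then x else 0) + (if P ∧ C then x else 0) - (if P ∧ A ∧ B then x else 0)
        - (if P ∧ A ∧ C then x else 0) - (if P ∧ B ∧ C then x else 0)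
        + (if P ∧ A ∧ B ∧ C then x else 0) := by
  by_cases P <;> by_cases A <;> by_cases B <;> by_cases C <;> simp [*]

section Fourier

variable {n : ℕ} [NeZero n]

lemma FT_eq_sum_stdAddChar (u : ZMod n → ℂ) (a : ZMod n) :
    FT n u a = ∑ x, u x * ZMod.stdAddChar (a * x) := by
  refine sum_congr rfl fun x _ => ?_
  have hax : a * x = ((a.val * x.val : ℕ) : ZMod n) := by simp
  rw [hax, ZMod.stdAddChar_apply, ZMod.toCircle_natCast]
  push_cast
  rfl

lemma sum_stdAddChar_mul (b : ZMod n) :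
    ∑ t : ZMod n, ZMod.stdAddChar (t * b) = if b = 0 then (n : ℂ) else 0 := by
  rw [AddChar.sum_mulShift b (ZMod.isPrimitive_stdAddChar n), ZMod.card]
  split_ifs <;> simp

lemma sum_FT (w : ZMod n → ℂ) : ∑ t, FT n w t = n * w 0 := by
  simp_rw [FT_eq_sum_stdAddChar]
  rw [sum_comm]
  simp_rw [← mul_sum, sum_stdAddChar_mul]
  simp [mul_comm]

lemma FT_mul_conj_FT (u v : ZMod n → ℂ) (t : ZMod n) :
    FT n u t * conj (FT n v t) = FT n (PC n u v) (-t) := by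
  simp_rw [FT_eq_sum_stdAddChar, PC, map_sum, sum_mul_sum, sum_mul]
  conv_rhs => rw [sum_comm]
  refine sum_congr rfl fun x _ => Fintype.sum_equiv (Equiv.subRight x) _ _ fun y => ?_
  rw [Equiv.subRight_apply, add_sub_cancel, map_mul (starRingEnd ℂ), ← AddChar.map_neg_eq_conj,
    show -t * (y - x) = t * x + -(t * y) by ring, AddChar.map_add_eq_mul]
  ring

lemma sum_norm_sq_FT (w : ZMod n → ℂ) : ∑ t, ‖FT n w t‖ ^ 2 = n * ∑ x, ‖w x‖ ^ 2 := by
  have h : ∑ t, FT n w t * conj (FT n w t) = n * ∑ x, w x * conj (w x) := by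
    simp_rw [FT_mul_conj_FT]
    rw [Fintype.sum_equiv (Equiv.neg _) (fun t => FT n (PC n w w) (-t)) _ fun _ => rfl, sum_FT, PC]
    simp
  simp_rw [Complex.mul_conj'] at h
  exact_mod_cast h

lemma sum_norm_sq_FT_mul_norm_sq_FT (u v : ZMod n → ℂ) :
    ∑ t, ‖FT n u t‖ ^ 2 * ‖FT n v t‖ ^ 2 = n * ∑ a, ‖PC n u v a‖ ^ 2 := by
  calc ∑ t, ‖FT n u t‖ ^ 2 * ‖FT n v t‖ ^ 2 = ∑ t, ‖FT n (PC n u v) (-t)‖ ^ 2 := by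
        simp_rw [← FT_mul_conj_FT, norm_mul, Complex.norm_conj, mul_pow]
    _ = ∑ t, ‖FT n (PC n u v) t‖ ^ 2 := Fintype.sum_equiv (Equiv.neg _) _ _ fun _ => rfl
    _ = n * ∑ a, ‖PC n u v a‖ ^ 2 := sum_norm_sq_FT _

/-- Cauchy–Schwarz on the nonzero frequencies, as the zero frequency of `u` vanishes. -/
lemma mul_sq_sum_norm_sq_le_sum_norm_sq_PC {u : ZMod n → ℂ} (hu : ∑ x, u x = 0) :
    n * (∑ x, ‖u x‖ ^ 2) ^ 2 ≤ (n - 1) * ∑ a, ‖PC n u u a‖ ^ 2 := by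
  set q : ZMod n → ℝ := fun t => ‖FT n u t‖ ^ 2
  have hq0 : q 0 = 0 := by simp [q, FT_eq_sum_stdAddChar, hu]
  have hcs := sq_sum_le_card_mul_sum_sq (s := univ.erase 0) (f := q)
  have hq2 : ∑ t, q t ^ 2 = n * ∑ a, ‖PC n u u a‖ ^ 2 := by
    rw [← sum_norm_sq_FT_mul_norm_sq_FT]; simp [q, sq]
  rw [sum_erase _ hq0, sum_erase _ (by simp [hq0]), card_erase_of_mem (mem_univ _),
    card_univ, ZMod.card, Nat.cast_sub NeZero.one_le, sum_norm_sq_FT, hq2] at hcs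
  have hn : (0 : ℝ) < n := by exact_mod_cast NeZero.pos n
  refine le_of_mul_le_mul_left ?_ hn
  linear_combination hcs

end Fourier

section Orthogonality

variable {R : Type*} [CommRing R] [Fintype R]

lemma sum_mulChar_mul_conj (χ ψ : MulChar R ℂ) :
    ∑ a, χ a * conj (ψ a) = if χ = ψ then (Fintype.card Rˣ : ℂ) else 0 := by
  simp_rw [starRingEnd_apply, MulChar.star_apply', ← MulChar.mul_apply]
  split_ifs with h
  · rw [h, mul_inv_cancel, MulChar.sum_one_eq_card_units]
  · exact MulChar.sum_eq_zero_of_ne_one (mul_inv_eq_one.not.mpr h)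

lemma sum_charSum_mul_conj {ι : Type*} [Fintype ι] (a : ι → ℂ) (μ : ι → MulChar R ℂ) :
    ∑ x, (∑ i, a i * μ i x) * conj (∑ j, a j * μ j x)
      = Fintype.card Rˣ * ∑ i, ∑ j, if μ i = μ j then a i * conj (a j) else 0 := by
  simp_rw [map_sum, map_mul, sum_mul_sum, mul_sum]
  rw [sum_comm]
  refine sum_congr rfl fun i _ => ?_
  rw [sum_comm]
  refine sum_congr rfl fun j _ => ?_
  simp_rw [mul_mul_mul_comm (a i) _ (conj (a j)), ← mul_sum, sum_mulChar_mul_conj]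
  split_ifs <;> ring

end Orthogonality

section GaussSum

variable {p : ℕ} [Fact p.Prime]

lemma gauss_eq_gaussSum (χ : MChar p) : gauss p χ = gaussSum χ ZMod.stdAddChar := by
  refine sum_congr rfl fun x _ => ?_
  rw [ZMod.stdAddChar_apply, ZMod.toCircle_apply, mul_comm]

lemma FT_mulChar {χ : MChar p} (hχ : χ ≠ 1) (t : ZMod p) : FT p χ t = χ⁻¹ t * gauss p χ := by
  rcases eq_or_ne t 0 with rfl | ht
  · simp [FT_eq_sum_stdAddChar, MulChar.sum_eq_zero_of_ne_one hχ, MulChar.map_zero]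
  · have hshift := gaussSum_mulShift_eq χ ZMod.stdAddChar (Units.mk0 t ht)
    rw [Units.val_mk0] at hshift
    rw [FT_eq_sum_stdAddChar, gauss_eq_gaussSum, ← hshift]
    simp [gaussSum, AddChar.mulShift_apply, mul_comm]

lemma gauss_mul_conj_gauss {χ : MChar p} (hχ : χ ≠ 1) : gauss p χ * conj (gauss p χ) = p := by
  rw [gauss_eq_gaussSum, starRingEnd_apply, star_gaussSum_eq,
    gaussSum_mul_gaussSum_eq_card hχ (ZMod.isPrimitive_stdAddChar p), ZMod.card]

lemma gauss_mul_gauss_inv {χ : MChar p} (hχ : χ ≠ 1) :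
    gauss p χ * gauss p χ⁻¹ = χ (-1) * p := by
  rw [gauss_eq_gaussSum, gauss_eq_gaussSum, ← mul_gaussSum_inv_eq_gaussSum χ⁻¹, mul_left_comm,
    gaussSum_mul_gaussSum_eq_card hχ (ZMod.isPrimitive_stdAddChar p), ZMod.card,
    MulChar.inv_apply', inv_neg_one]

lemma mulChar_neg_one_mul_self (χ : MChar p) : χ (-1) * χ (-1) = 1 := by
  rw [← map_mul, neg_one_mul, neg_neg, map_one]

lemma quadChar_mul_self : quadChar p * quadChar p = 1 := by
  rw [← sq]
  exact ((quadraticChar_isQuadratic (ZMod p)).comp (Int.castRingHom ℂ)).sq_eq_one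

lemma eq_one_or_eq_quadChar_of_mul_self_eq_one {φ : MChar p} (h : φ * φ = 1) :
    φ = 1 ∨ φ = quadChar p := by
  refine or_iff_not_imp_left.mpr fun hφ => MulChar.ext fun a => ?_
  have hsq : ∀ x : ZMod p, IsSquare x → x ≠ 0 → φ x = 1 := by
    rintro x ⟨y, rfl⟩ hx
    rw [map_mul, ← MulChar.mul_apply, h,
      MulChar.one_apply (isUnit_iff_ne_zero.mpr (left_ne_zero_of_mul hx))]
  -- `φ` is `1` on squares, and a non-square `a` times a non-square `b` with `φ b = -1` is a square.
  obtain ⟨b, hb⟩ := MulChar.ne_one_iff.mp hφ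
  have hb' : φ b = -1 := by
    refine (mul_self_eq_one_iff.mp ?_).resolve_left hb
    rw [← MulChar.mul_apply, h, MulChar.one_apply b.isUnit]
  have hbsq : ¬IsSquare (b : ZMod p) := fun hs => hb (hsq _ hs b.ne_zero)
  rw [quadChar, MulChar.ringHomComp_apply]
  by_cases ha : IsSquare (a : ZMod p)
  · rw [hsq _ ha a.ne_zero, (quadraticChar_one_iff_isSquare a.ne_zero).mpr ha, map_one]
  · have hab : IsSquare ((a * b : (ZMod p)ˣ) : ZMod p) := by
      rw [← quadraticChar_one_iff_isSquare (Units.ne_zero _), Units.val_mul, map_mul,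
        quadraticChar_neg_one_iff_not_isSquare.mpr ha,
        quadraticChar_neg_one_iff_not_isSquare.mpr hbsq, neg_one_mul, neg_neg]
    have hab' := hsq _ hab (Units.ne_zero _)
    rw [Units.val_mul, map_mul, hb'] at hab'
    rw [quadraticChar_neg_one_iff_not_isSquare.mpr ha, map_neg, map_one]
    linear_combination -hab'

end GaussSum

section CharCombo

variable {p : ℕ} [Fact p.Prime] {c d : MChar p → ℂ}

def gaussCoef (c : MChar p → ℂ) (φ : MChar p) : ℂ := c φ * gauss p φ

lemma FT_combFun (hc : c 1 = 0) (t : ZMod p) :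
    FT p (combFun p c) t = ∑ φ, gaussCoef c φ * φ⁻¹ t := by
  simp_rw [FT_eq_sum_stdAddChar, combFun, sum_mul]
  rw [sum_comm]
  refine sum_congr rfl fun φ _ => ?_
  rcases eq_or_ne φ 1 with rfl | hφ
  · simp [hc, gaussCoef]
  · simp_rw [mul_assoc, ← mul_sum, ← FT_eq_sum_stdAddChar, FT_mulChar hφ, gaussCoef]
    ring

lemma sum_combFun (hc : c 1 = 0) : ∑ x, combFun p c x = 0 := by
  simp only [combFun]
  rw [sum_comm]
  refine sum_eq_zero fun φ _ => ?_
  rcases eq_or_ne φ 1 with rfl | hφ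
  · simp [hc]
  · rw [← mul_sum, MulChar.sum_eq_zero_of_ne_one hφ, mul_zero]

lemma sum_norm_sq_combFun (hc : ∑ χ, ‖c χ‖ ^ 2 = 1) :
    ∑ x, ‖combFun p c x‖ ^ 2 = p - 1 := by
  have h := sum_charSum_mul_conj c (fun φ : MChar p => φ)
  simp only [sum_ite_eq, mem_univ, if_true, Fintype.card_units, ZMod.card, Complex.mul_conj'] at h
  have hc' : ∑ χ, (‖c χ‖ : ℂ) ^ 2 = 1 := by exact_mod_cast hc
  rw [hc', mul_one, Nat.cast_sub (Fact.out : p.Prime).one_le, Nat.cast_one] at h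
  exact_mod_cast h

lemma one_le_mean_sq_PC_self (hc1 : c 1 = 0) (hc : ∑ χ, ‖c χ‖ ^ 2 = 1) :
    1 ≤ 1 / (p * (p - 1)) * ((∑ a, ‖PC p (combFun p c) (combFun p c) a‖ ^ 2 : ℝ) : ℂ) := by
  have h := mul_sq_sum_norm_sq_le_sum_norm_sq_PC (sum_combFun hc1)
  rw [sum_norm_sq_combFun hc] at h
  have hp : (1 : ℝ) < p := by exact_mod_cast (Fact.out : p.Prime).one_lt
  have hpos : (0 : ℝ) < p * (p - 1) := by nlinarith
  have hle : p * (p - 1) ≤ ∑ a, ‖PC p (combFun p c) (combFun p c) a‖ ^ 2 := by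
    refine le_of_mul_le_mul_left ?_ (sub_pos.mpr hp)
    linear_combination h
  have hreal : (1 : ℝ) ≤ 1 / (p * (p - 1)) * ∑ a, ‖PC p (combFun p c) (combFun p c) a‖ ^ 2 := by
    rwa [one_div_mul_eq_div, one_le_div hpos]
  exact_mod_cast hreal

lemma gaussCoef_mul_conj (hc : c 1 = 0) (φ : MChar p) :
    gaussCoef c φ * conj (gaussCoef d φ) = p * (c φ * conj (d φ)) := by
  rcases eq_or_ne φ 1 with rfl | hφ
  · simp [gaussCoef, hc]
  · rw [gaussCoef, gaussCoef, map_mul, mul_mul_mul_comm, gauss_mul_conj_gauss hφ, mul_comm]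

lemma gaussCoef_mul_gaussCoef_inv (hc : c 1 = 0) (φ : MChar p) :
    gaussCoef c φ * gaussCoef d φ⁻¹ = p * φ (-1) * (c φ * d φ⁻¹) := by
  rcases eq_or_ne φ 1 with rfl | hφ
  · simp [gaussCoef, hc]
  · rw [gaussCoef, gaussCoef, mul_mul_mul_comm, gauss_mul_gauss_inv hφ]
    ring

def quadTerm (c d : MChar p → ℂ) (φ χ ψ ω : MChar p) : ℂ :=
  gaussCoef c φ * gaussCoef d χ * conj (gaussCoef c ψ * gaussCoef d ω) / (p : ℂ) ^ 2

lemma FT_combFun_mul_FT_combFun (hc : c 1 = 0) (hd : d 1 = 0) (t : ZMod p) :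
    FT p (combFun p c) t * FT p (combFun p d) t
      = ∑ q : MChar p × MChar p, gaussCoef c q.1 * gaussCoef d q.2 * (q.1 * q.2)⁻¹ t := by
  rw [FT_combFun hc, FT_combFun hd, sum_mul_sum, ← Fintype.sum_prod_type']
  refine sum_congr rfl fun q _ => ?_
  rw [mul_inv, MulChar.mul_apply]
  ring

lemma mean_sq_PC_eq_sum_quadTerm (hc : c 1 = 0) (hd : d 1 = 0) :
    1 / (p * (p - 1)) * ((∑ a, ‖PC p (combFun p c) (combFun p d) a‖ ^ 2 : ℝ) : ℂ)
      = ∑ φ, ∑ χ, ∑ ψ, ∑ ω, if φ * χ = ψ * ω then quadTerm c d φ χ ψ ω else 0 := by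
  set F := FT p (combFun p c)
  set G := FT p (combFun p d)
  have hparseval : ∑ t, F t * G t * conj (F t * G t)
      = p * ((∑ a, ‖PC p (combFun p c) (combFun p d) a‖ ^ 2 : ℝ) : ℂ) := by
    simp only [Complex.mul_conj', norm_mul, Complex.ofReal_mul, mul_pow]
    exact_mod_cast sum_norm_sq_FT_mul_norm_sq_FT (combFun p c) (combFun p d)
  have horth : ∑ t, F t * G t * conj (F t * G t)
      = (p - 1) * ∑ φ, ∑ χ, ∑ ψ, ∑ ω, if φ * χ = ψ * ω then
          gaussCoef c φ * gaussCoef d χ * conj (gaussCoef c ψ * gaussCoef d ω) else 0 := by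
    simp_rw [F, G, FT_combFun_mul_FT_combFun hc hd]
    rw [sum_charSum_mul_conj (fun q : MChar p × MChar p => gaussCoef c q.1 * gaussCoef d q.2)
      fun q => (q.1 * q.2)⁻¹]
    simp only [inv_inj, Fintype.sum_prod_type, Fintype.card_units, ZMod.card,
      Nat.cast_sub (Fact.out : p.Prime).one_le, Nat.cast_one]
  have hquad : (∑ φ, ∑ χ, ∑ ψ, ∑ ω, if φ * χ = ψ * ω then quadTerm c d φ χ ψ ω else 0)
      = (∑ φ, ∑ χ, ∑ ψ, ∑ ω, if φ * χ = ψ * ω then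
          gaussCoef c φ * gaussCoef d χ * conj (gaussCoef c ψ * gaussCoef d ω) else 0) / p ^ 2 := by
    simp only [quadTerm, sum_div, ite_div, zero_div]
  have hp0 : (p : ℂ) ≠ 0 := NeZero.ne _
  have hp1 : (p : ℂ) - 1 ≠ 0 := sub_ne_zero.mpr (by exact_mod_cast (Fact.out : p.Prime).ne_one)
  rw [hquad]
  field_simp
  linear_combination hparseval.symm.trans horth

end CharCombo

section QuadTerm

variable {p : ℕ} [Fact p.Prime] {c d : MChar p → ℂ}

lemma sum_mul_conj_eq_one (hc : ∑ χ, ‖c χ‖ ^ 2 = 1) : ∑ φ, c φ * conj (c φ) = 1 := by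
  simp_rw [Complex.mul_conj']
  exact_mod_cast hc

lemma quadTerm_eq_mul_conj_mul_mul_conj (hc : c 1 = 0) (hd : d 1 = 0) (φ χ : MChar p) :
    quadTerm c d φ χ φ χ = c φ * conj (c φ) * (d χ * conj (d χ)) := by
  have hp0 : (p : ℂ) ≠ 0 := NeZero.ne _
  rw [quadTerm, map_mul, mul_mul_mul_comm (gaussCoef c φ), gaussCoef_mul_conj hc,
    gaussCoef_mul_conj hd]
  field_simp

lemma sum_quadTerm_ite_eq_inv (hc : c 1 = 0) :
    ∑ φ, ∑ χ, ∑ ψ, ∑ ω, (if φ * χ = ψ * ω ∧ φ = χ⁻¹ then quadTerm c d φ χ ψ ω else 0)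
      = Vparam p c d := by
  have hcond : ∀ φ χ ψ ω : MChar p, (φ * χ = ψ * ω ∧ φ = χ⁻¹) ↔ (χ = φ⁻¹ ∧ ω = ψ⁻¹) := by
    refine fun φ χ ψ ω => ⟨?_, ?_⟩
    · rintro ⟨h, rfl⟩
      rw [inv_mul_cancel, eq_comm, mul_eq_one_iff_inv_eq] at h
      exact ⟨(inv_inv χ).symm, h.symm⟩
    · rintro ⟨rfl, rfl⟩
      simp
  have hterm : ∀ φ ψ : MChar p, quadTerm c d φ φ⁻¹ ψ ψ⁻¹
      = c φ * d φ⁻¹ * φ (-1) * conj (c ψ * d ψ⁻¹ * ψ (-1)) := by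
    intro φ ψ
    have hp0 : (p : ℂ) ≠ 0 := NeZero.ne _
    rw [quadTerm, gaussCoef_mul_gaussCoef_inv hc, gaussCoef_mul_gaussCoef_inv hc]
    simp only [map_mul, Complex.conj_natCast]
    field_simp
  simp only [hcond, ite_and, sum_ite_irrel, sum_const_zero, sum_ite_eq', mem_univ, if_true, hterm]
  rw [← sum_mul_sum, ← map_sum, Complex.mul_conj', Vparam, Complex.ofReal_pow]

lemma sum_quadTerm_ite_eq_left (hc : IsCharCombo p c) (hd : IsCharCombo p d) :
    ∑ φ, ∑ χ, ∑ ψ, ∑ ω, (if φ * χ = ψ * ω ∧ φ = ψ then quadTerm c d φ χ ψ ω else 0) = 1 := by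
  have hcond : ∀ φ χ ψ ω : MChar p, (φ * χ = ψ * ω ∧ φ = ψ) ↔ (ψ = φ ∧ ω = χ) := by
    refine fun φ χ ψ ω => ⟨?_, ?_⟩
    · rintro ⟨h, rfl⟩; exact ⟨rfl, (mul_left_cancel h).symm⟩
    · rintro ⟨rfl, rfl⟩; exact ⟨rfl, rfl⟩
  simp only [hcond, ite_and, sum_ite_irrel, sum_const_zero, sum_ite_eq', mem_univ, if_true,
    quadTerm_eq_mul_conj_mul_mul_conj hc.1 hd.1]
  rw [← sum_mul_sum, sum_mul_conj_eq_one hc.2, sum_mul_conj_eq_one hd.2, mul_one]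

lemma sum_quadTerm_ite_eq_right (hc : c 1 = 0) (hd : d 1 = 0) :
    ∑ φ, ∑ χ, ∑ ψ, ∑ ω, (if φ * χ = ψ * ω ∧ φ = ω then quadTerm c d φ χ ψ ω else 0)
      = Uparam p c d := by
  have hcond : ∀ φ χ ψ ω : MChar p, (φ * χ = ψ * ω ∧ φ = ω) ↔ (ψ = χ ∧ ω = φ) := by
    refine fun φ χ ψ ω => ⟨?_, ?_⟩
    · rintro ⟨h, rfl⟩; exact ⟨(mul_left_cancel (h.trans (mul_comm _ _))).symm, rfl⟩
    · rintro ⟨rfl, rfl⟩; exact ⟨mul_comm _ _, rfl⟩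
  have hterm : ∀ φ χ : MChar p, quadTerm c d φ χ χ φ
      = c φ * conj (d φ) * conj (c χ * conj (d χ)) := by
    intro φ χ
    have hp0 : (p : ℂ) ≠ 0 := NeZero.ne _
    rw [quadTerm, map_mul, mul_comm (conj (gaussCoef c χ)), mul_mul_mul_comm (gaussCoef c φ),
      gaussCoef_mul_conj hc, gaussCoef_mul_conj hd]
    simp only [map_mul, Complex.conj_conj]
    field_simp
  simp only [hcond, ite_and, sum_ite_irrel, sum_const_zero, sum_ite_eq', mem_univ, if_true, hterm]
  rw [← sum_mul_sum, ← map_sum, Complex.mul_conj', Uparam, Complex.ofReal_pow]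

lemma sum_quadTerm_ite_eq_inv_left (hc : c 1 = 0) (hd : d 1 = 0) :
    ∑ φ, ∑ χ, ∑ ψ, ∑ ω,
        (if φ * χ = ψ * ω ∧ φ = χ⁻¹ ∧ φ = ψ then quadTerm c d φ χ ψ ω else 0)
      = ((∑ φ, ‖c φ * d φ⁻¹‖ ^ 2 : ℝ) : ℂ) := by
  have hcond : ∀ φ χ ψ ω : MChar p,
      (φ * χ = ψ * ω ∧ φ = χ⁻¹ ∧ φ = ψ) ↔ (χ = φ⁻¹ ∧ ψ = φ ∧ ω = φ⁻¹) := by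
    refine fun φ χ ψ ω => ⟨?_, ?_⟩
    · rintro ⟨h, hφ, rfl⟩
      have hχ : χ = φ⁻¹ := by rw [hφ, inv_inv]
      exact ⟨hχ, rfl, (mul_left_cancel h).symm.trans hχ⟩
    · rintro ⟨rfl, rfl, rfl⟩; simp
  simp only [hcond, ite_and, sum_ite_irrel, sum_const_zero, sum_ite_eq', mem_univ, if_true,
    quadTerm_eq_mul_conj_mul_mul_conj hc hd]
  push_cast
  refine sum_congr rfl fun φ _ => ?_
  rw [← Complex.mul_conj', map_mul]
  ring

lemma sum_quadTerm_ite_eq_inv_right (hc : c 1 = 0) :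
    ∑ φ, ∑ χ, ∑ ψ, ∑ ω,
        (if φ * χ = ψ * ω ∧ φ = χ⁻¹ ∧ φ = ω then quadTerm c d φ χ ψ ω else 0)
      = ∑ φ, c φ * conj (c φ⁻¹) * d φ⁻¹ * conj (d φ) := by
  have hcond : ∀ φ χ ψ ω : MChar p,
      (φ * χ = ψ * ω ∧ φ = χ⁻¹ ∧ φ = ω) ↔ (χ = φ⁻¹ ∧ ψ = φ⁻¹ ∧ ω = φ) := by
    refine fun φ χ ψ ω => ⟨?_, ?_⟩
    · rintro ⟨h, rfl, rfl⟩
      rw [inv_mul_cancel, eq_comm, mul_eq_one_iff_eq_inv] at h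
      exact ⟨(inv_inv χ).symm, h, rfl⟩
    · rintro ⟨rfl, rfl, rfl⟩; simp
  have hterm : ∀ φ : MChar p, quadTerm c d φ φ⁻¹ φ⁻¹ φ
      = c φ * conj (c φ⁻¹) * d φ⁻¹ * conj (d φ) := by
    intro φ
    have hp0 : (p : ℂ) ≠ 0 := NeZero.ne _
    have hinv := gaussCoef_mul_gaussCoef_inv (d := d) hc φ⁻¹
    rw [inv_inv] at hinv
    rw [quadTerm, gaussCoef_mul_gaussCoef_inv hc, hinv]
    simp only [map_mul, starRingEnd_apply, star_natCast, MulChar.star_apply', inv_inv]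
    field_simp
    linear_combination (c φ * d φ⁻¹ * star (c φ⁻¹) * star (d φ)) * mulChar_neg_one_mul_self φ
  simp only [hcond, ite_and, sum_ite_irrel, sum_const_zero, sum_ite_eq', mem_univ, if_true, hterm]

lemma sum_quadTerm_ite_eq_left_right (hc : c 1 = 0) (hd : d 1 = 0) :
    ∑ φ, ∑ χ, ∑ ψ, ∑ ω,
        (if φ * χ = ψ * ω ∧ φ = ψ ∧ φ = ω then quadTerm c d φ χ ψ ω else 0)
      = ((∑ φ, ‖c φ * d φ‖ ^ 2 : ℝ) : ℂ) := by
  have hcond : ∀ φ χ ψ ω : MChar p,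
      (φ * χ = ψ * ω ∧ φ = ψ ∧ φ = ω) ↔ (χ = φ ∧ ψ = φ ∧ ω = φ) := by
    refine fun φ χ ψ ω => ⟨?_, ?_⟩
    · rintro ⟨h, rfl, rfl⟩; exact ⟨mul_left_cancel h, rfl, rfl⟩
    · rintro ⟨rfl, rfl, rfl⟩; exact ⟨rfl, rfl, rfl⟩
  simp only [hcond, ite_and, sum_ite_irrel, sum_const_zero, sum_ite_eq', mem_univ, if_true,
    quadTerm_eq_mul_conj_mul_mul_conj hc hd]
  push_cast
  refine sum_congr rfl fun φ _ => ?_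
  rw [← Complex.mul_conj', map_mul]
  ring

lemma sum_quadTerm_ite_eq_inv_left_right (hc : c 1 = 0) (hd : d 1 = 0) :
    ∑ φ, ∑ χ, ∑ ψ, ∑ ω,
        (if φ * χ = ψ * ω ∧ φ = χ⁻¹ ∧ φ = ψ ∧ φ = ω then quadTerm c d φ χ ψ ω else 0)
      = ((‖c (quadChar p) * d (quadChar p)‖ ^ 2 : ℝ) : ℂ) := by
  have hcond : ∀ φ χ ψ ω : MChar p,
      (φ * χ = ψ * ω ∧ φ = χ⁻¹ ∧ φ = ψ ∧ φ = ω) ↔ (φ * φ = 1 ∧ χ = φ ∧ ψ = φ ∧ ω = φ) := by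
    refine fun φ χ ψ ω => ⟨?_, ?_⟩
    · rintro ⟨h, hinv, rfl, rfl⟩
      have hχ := mul_left_cancel h
      subst hχ
      exact ⟨mul_eq_one_iff_eq_inv.mpr hinv, rfl, rfl, rfl⟩
    · rintro ⟨h, rfl, rfl, rfl⟩; exact ⟨rfl, eq_inv_of_mul_eq_one_left h, rfl, rfl⟩
  simp only [hcond, ite_and, sum_ite_irrel, sum_const_zero, sum_ite_eq', mem_univ, if_true,
    quadTerm_eq_mul_conj_mul_mul_conj hc hd]
  rw [sum_eq_single (quadChar p), if_pos quadChar_mul_self]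
  · push_cast
    rw [← Complex.mul_conj', map_mul]
    ring
  · intro φ _ hφ
    split_ifs with h
    · rcases eq_one_or_eq_quadChar_of_mul_self_eq_one h with rfl | rfl
      · simp [hc]
      · exact absurd rfl hφ
    · rfl
  · simp

lemma Sparam_eq_sum_quadTerm_sub :
    Sparam p c d
      = (∑ φ, ∑ χ, ∑ ψ, ∑ ω, if φ * χ = ψ * ω ∧ ¬φ = χ⁻¹ ∧ ¬φ = ψ ∧ ¬φ = ω then
          quadTerm c d φ χ ψ ω else 0)
        - ((∑ φ, ‖c φ * d φ‖ ^ 2 : ℝ) : ℂ) - ((∑ φ, ‖c φ * d φ⁻¹‖ ^ 2 : ℝ) : ℂ)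
        - ∑ φ, c φ * conj (c φ⁻¹) * d φ⁻¹ * conj (d φ)
        + ((‖c (quadChar p) * d (quadChar p)‖ ^ 2 : ℝ) : ℂ) := by
  have hterm : ∀ φ χ ψ ω : MChar p, c φ * d χ * conj (c ψ * d ω) *
      (gauss p φ * gauss p χ * conj (gauss p ψ * gauss p ω)) / (p : ℂ) ^ 2
        = quadTerm c d φ χ ψ ω := by
    intro φ χ ψ ω
    simp only [quadTerm, gaussCoef, map_mul]
    ring
  simp only [Sparam, hterm, ne_eq]

lemma sum_quadTerm_eq (hc : IsCharCombo p c) (hd : IsCharCombo p d) :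
    ∑ φ, ∑ χ, ∑ ψ, ∑ ω, (if φ * χ = ψ * ω then quadTerm c d φ χ ψ ω else 0)
      = Sparam p c d + 1 + Uparam p c d + Vparam p c d := by
  rw [sum_congr rfl fun φ _ => sum_congr rfl fun χ _ => sum_congr rfl fun ψ _ =>
    sum_congr rfl fun ω _ => ite_eq_inclusion_exclusion (φ * χ = ψ * ω) (φ = χ⁻¹) (φ = ψ) (φ = ω)
      (quadTerm c d φ χ ψ ω)]
  simp only [sum_add_distrib, sum_sub_distrib]
  rw [sum_quadTerm_ite_eq_inv hc.1, sum_quadTerm_ite_eq_left hc hd,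
    sum_quadTerm_ite_eq_right hc.1 hd.1, sum_quadTerm_ite_eq_inv_left hc.1 hd.1,
    sum_quadTerm_ite_eq_inv_right hc.1, sum_quadTerm_ite_eq_left_right hc.1 hd.1,
    sum_quadTerm_ite_eq_inv_left_right hc.1 hd.1, Sparam_eq_sum_quadTerm_sub]
  ring

lemma mean_sq_PC_eq (hc : IsCharCombo p c) (hd : IsCharCombo p d) :
    1 / (p * (p - 1)) * ((∑ a, ‖PC p (combFun p c) (combFun p d) a‖ ^ 2 : ℝ) : ℂ)
      = Sparam p c d + 1 + Uparam p c d + Vparam p c d :=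
  (mean_sq_PC_eq_sum_quadTerm hc.1 hd.1).trans (sum_quadTerm_eq hc hd)

end QuadTerm

/-- Proposition: mean square periodic crosscorrelation equals `S_{f,g} + 1 + U_{f,g} + V_{f,g}`;
and in the autocorrelation case this quantity is `S_{f,f} + 2 + V_{f,f} ≥ 1`. -/
theorem mean_sq_periodic_correlation (p : ℕ) [Fact p.Prime] (c d : MChar p → ℂ)
    (hc : IsCharCombo p c) (hd : IsCharCombo p d) :
    ((1 : ℂ) / ((p : ℂ) * ((p : ℂ) - 1))) *
        (↑(∑ a : ZMod p, norm (PC p (combFun p c) (combFun p d) a) ^ 2 : ℝ) : ℂ)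
      = Sparam p c d + 1 + (Uparam p c d : ℂ) + (Vparam p c d : ℂ) ∧
    (c = d →
      (Sparam p c c + 1 + (Uparam p c c : ℂ) + (Vparam p c c : ℂ)
          = Sparam p c c + 2 + (Vparam p c c : ℂ) ∧
        (1 : ℂ) ≤ Sparam p c c + 2 + (Vparam p c c : ℂ))) := by
  refine ⟨mean_sq_PC_eq hc hd, ?_⟩
  rintro rfl
  have hU : (Uparam p c c : ℂ) = 1 := by
    simp [Uparam, sum_mul_conj_eq_one hc.2]
  have hS : Sparam p c c + 2 + (Vparam p c c : ℂ)
      = Sparam p c c + 1 + Uparam p c c + Vparam p c c := by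
    rw [hU]; ring
  refine ⟨hS.symm, ?_⟩
  rw [hS, ← mean_sq_PC_eq hc hc]
  exact one_le_mean_sq_PC_self hc.1 hc.2

end Paper
end
end

section
/- Let m be a positive integer, p a prime with p ≡ 1 (mod 2m), 𝒜 a subset of F_p^*/F_p^{*2m} with |𝒜| = m, and let Θ_p be the set of multiplicative characters χ of F_p with χ^{2m} = χ₀ (the unique subgroup of order 2m of the character group); every χ ∈ Θ_p is constant on each coset A ∈ F_p^*/F_p^{*2m}, and we write χ(A) for that value. Define f_χ = (1/m)·Σ_{A∈𝒜} χ̄(A) if χ ∈ Θ_p and χ ≠ χ₀, and f_χ = 0 otherwise. Then: (i) F_{p,𝒜}(j) = Σ_χ f_χ·χ(j) for every j ∈ F_p; (ii) Σ_χ |f_χ|² = 1 (so every 2m-th residue class sequence f_{p,𝒜}^{s,ℓ} is a unimodularizable character combination sequence with character combination {f_χ}); and (iii) f_{χ̄} = conj(f_χ) for every multiplicative character χ. -/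
open scoped BigOperators Classical ComplexOrder

noncomputable section

namespace Paper

/-! The characters `χ` with `χ ^ (2m) = 1` are exactly those trivial on the subgroup `H` of
`2m`-th powers, and there are `[F_p^* : H] = 2m` of them, so orthogonality gives
`Σ_{χ ≠ 1, χ ^ (2m) = 1} χ(u) = 2m·[u ∈ H] − 1`. Summing this over the cosets in `𝒜` yields
`Σ_χ f_χ χ(u) = (2m·[uH ∈ 𝒜] − m) / m = ±1`. Conjugating a coefficient inverts the character,
so `|f_χ|² = (1/m) Σ_{B ∈ 𝒜} f_χ χ(B)`, and summing over `χ` gives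
`Σ_χ |f_χ|² = (1/m) Σ_{B ∈ 𝒜} F_{p,𝒜}(B) = 1`. -/

theorem inv_ne_one_and_pow_eq_one_iff {G : Type*} [Group G] (g : G) (n : ℕ) :
    (g⁻¹ ≠ 1 ∧ g⁻¹ ^ n = 1) ↔ (g ≠ 1 ∧ g ^ n = 1) := by
  rw [ne_eq, inv_eq_one, inv_pow, inv_eq_one]

section TorsionCharacters

open Finset

variable {M : Type*} [CommMonoid M] (n : ℕ)

theorem sum_mulChar_pow_eq_one_apply [Fintype (MulChar M ℂ)] [DecidableEq (MulChar M ℂ)]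
    (a : M) :
    ∑ χ : MulChar M ℂ with χ ^ n = 1, χ a =
      if ∀ χ : MulChar M ℂ, χ ^ n = 1 → χ a = 1 then (#{χ : MulChar M ℂ | χ ^ n = 1} : ℂ)
      else 0 := by
  split_ifs with h
  · rw [sum_congr rfl fun χ hχ => h χ (mem_filter.mp hχ).2, sum_const, nsmul_one]
  · push Not at h
    obtain ⟨ψ, hψn, hψa⟩ := h
    -- multiplication by `ψ` permutes the characters with `χ ^ n = 1`
    refine eq_zero_of_mul_eq_self_left hψa ?_
    rw [mul_sum]
    refine sum_nbij' (ψ * ·) (ψ⁻¹ * ·) ?_ ?_ (fun χ _ => inv_mul_cancel_left ψ χ)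
      (fun χ _ => mul_inv_cancel_left ψ χ) (fun χ _ => (MulChar.mul_apply ψ χ a).symm)
    all_goals
      intro χ hχ
      rw [mem_filter] at hχ ⊢
      simp [mul_pow, hχ.2, hψn]

variable [Finite M]

theorem ofDual_subgroupOrderIsoSubgroupMulChar_powMonoidHom_range :
    (MulChar.subgroupOrderIsoSubgroupMulChar M ℂ (powMonoidHom n).range).ofDual =
      (powMonoidHom n : MulChar M ℂ →* MulChar M ℂ).ker := by
  ext χ
  rw [MulChar.mem_subgroupOrderIsoSubgroupMulChar_iff, MonoidHom.mem_ker, powMonoidHom_apply]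
  constructor
  · intro h
    refine MulChar.ext fun u => ?_
    rw [MulChar.pow_apply_coe, MulChar.one_apply_coe, ← map_pow, ← Units.val_pow_eq_pow_val]
    exact h _ ⟨u, rfl⟩
  · rintro h _ ⟨u, rfl⟩
    rw [powMonoidHom_apply, Units.val_pow_eq_pow_val, map_pow, ← MulChar.pow_apply_coe, h,
      MulChar.one_apply_coe]

theorem mem_powMonoidHom_range_iff_forall_mulChar (u : Mˣ) :
    u ∈ (powMonoidHom n : Mˣ →* Mˣ).range ↔ ∀ χ : MulChar M ℂ, χ ^ n = 1 → χ u = 1 := by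
  set e := MulChar.subgroupOrderIsoSubgroupMulChar M ℂ
  conv_lhs => rw [← e.symm_apply_apply (powMonoidHom n).range]
  rw [← OrderDual.toDual_ofDual (e _), ofDual_subgroupOrderIsoSubgroupMulChar_powMonoidHom_range,
    MulChar.mem_subgroupOrderIsoSubgroupMulChar_symm_iff]
  rfl

variable [Fintype (MulChar M ℂ)] [DecidableEq (MulChar M ℂ)] [IsCyclic Mˣ]

theorem card_mulChar_pow_eq_one (hn : n ∣ Nat.card Mˣ) :
    #{χ : MulChar M ℂ | χ ^ n = 1} = n := by
  rw [← Fintype.card_subtype, ← Nat.card_eq_fintype_card]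
  have := MulChar.card_subgroupOrderIsoSubgroupMulChar (M := M) (R := ℂ)
    (H := (powMonoidHom n).range)
  rw [ofDual_subgroupOrderIsoSubgroupMulChar_powMonoidHom_range, ← Subgroup.index,
    IsCyclic.index_powMonoidHom_range, Nat.gcd_eq_right hn] at this
  exact this

theorem sum_mulChar_pow_eq_one_apply_units (hn : n ∣ Nat.card Mˣ) (u : Mˣ) :
    ∑ χ : MulChar M ℂ with χ ^ n = 1, χ u =
      if u ∈ (powMonoidHom n : Mˣ →* Mˣ).range then (n : ℂ) else 0 := by
  rw [sum_mulChar_pow_eq_one_apply, card_mulChar_pow_eq_one n hn,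
    mem_powMonoidHom_range_iff_forall_mulChar]
  congr

theorem sum_mulChar_ne_one_pow_eq_one_apply_units (hn : n ∣ Nat.card Mˣ) (u : Mˣ) :
    ∑ χ : MulChar M ℂ with χ ≠ 1 ∧ χ ^ n = 1, χ u =
      (if u ∈ (powMonoidHom n : Mˣ →* Mˣ).range then (n : ℂ) else 0) - 1 := by
  have hfilter : ({χ : MulChar M ℂ | χ ≠ 1 ∧ χ ^ n = 1} : Finset _) =
      ({χ : MulChar M ℂ | χ ^ n = 1} : Finset _).erase 1 := by
    ext χ
    simp [and_comm]
  rw [hfilter, sum_erase_eq_sub (by simp), sum_mulChar_pow_eq_one_apply_units n hn,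
    MulChar.one_apply_coe]

end TorsionCharacters

section ResidueClasses

open Finset

variable {m p : ℕ} (A : Finset (ResCosets p m))

theorem out_inv_mul_mem_powSubgroup_iff (B : ResCosets p m) (u : (ZMod p)ˣ) :
    B.out⁻¹ * u ∈ powSubgroup p m ↔ B = u := by
  rw [← QuotientGroup.eq, QuotientGroup.out_eq']

theorem resFun_out_of_mem {B : ResCosets p m} (hB : B ∈ A) :
    resFun p m A (B.out : ZMod p) = 1 := by
  rw [resFun, dif_pos B.out.isUnit, IsUnit.unit_of_val_units, QuotientGroup.out_eq', if_pos hB]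

variable [Fact p.Prime]

theorem ne_zero_of_mod_two_mul_eq_one (hp1 : p % (2 * m) = 1) : m ≠ 0 := by
  rintro rfl
  rw [mul_zero, Nat.mod_zero] at hp1
  exact (Fact.out : p.Prime).one_lt.ne' hp1

theorem two_mul_dvd_card_units (hp1 : p % (2 * m) = 1) : 2 * m ∣ Nat.card (ZMod p)ˣ := by
  rw [Nat.card_eq_fintype_card, ZMod.card_units, ← hp1]
  exact Nat.dvd_sub_mod p

theorem resCoef_inv (χ : MChar p) :
    resCoef p m A χ⁻¹ = starRingEnd ℂ (resCoef p m A χ) := by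
  simp only [resCoef, inv_ne_one_and_pow_eq_one_iff, inv_inv]
  split_ifs
  · simp only [map_mul, map_sum, map_div₀, map_one, map_natCast, ← Complex.star_def,
      MulChar.star_apply', inv_inv]
  · rw [map_zero]

theorem resCoef_mul_conj (χ : MChar p) :
    resCoef p m A χ * starRingEnd ℂ (resCoef p m A χ) =
      1 / (m : ℂ) * ∑ B ∈ A, resCoef p m A χ * χ (B.out : ZMod p) := by
  rw [← resCoef_inv]
  by_cases h : χ ≠ 1 ∧ χ ^ (2 * m) = 1
  · have hinv : resCoef p m A χ⁻¹ = 1 / (m : ℂ) * ∑ B ∈ A, χ (B.out : ZMod p) := by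
      rw [resCoef, if_pos ((inv_ne_one_and_pow_eq_one_iff χ _).mpr h), inv_inv]
    rw [hinv, mul_left_comm, mul_sum]
  · simp [resCoef, h]

theorem sum_resCoef_mul_apply_units (hp1 : p % (2 * m) = 1) (u : (ZMod p)ˣ) :
    ∑ χ : MChar p, resCoef p m A χ * χ u =
      1 / (m : ℂ) * ∑ B ∈ A, ((if B = u then ((2 * m : ℕ) : ℂ) else 0) - 1) := by
  calc ∑ χ : MChar p, resCoef p m A χ * χ u
      = ∑ χ : MChar p with χ ≠ 1 ∧ χ ^ (2 * m) = 1,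
          1 / (m : ℂ) * ∑ B ∈ A, χ ((B.out⁻¹ * u : (ZMod p)ˣ) : ZMod p) := by
        rw [sum_filter]
        refine sum_congr rfl fun χ _ => ?_
        rw [resCoef]
        split_ifs
        · simp only [mul_assoc, sum_mul, Units.val_mul, map_mul, Units.val_inv_eq_inv_val,
            MulChar.inv_apply']
        · rw [zero_mul]
    _ = 1 / (m : ℂ) * ∑ B ∈ A, ∑ χ : MChar p with χ ≠ 1 ∧ χ ^ (2 * m) = 1,
          χ ((B.out⁻¹ * u : (ZMod p)ˣ) : ZMod p) := by
        rw [← mul_sum, sum_comm]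
    _ = _ := by
        refine congrArg _ (sum_congr rfl fun B _ => ?_)
        rw [sum_mulChar_ne_one_pow_eq_one_apply_units _ (two_mul_dvd_card_units hp1)]
        congr 2
        exact propext (out_inv_mul_mem_powSubgroup_iff B u)

theorem resFun_eq_sum_resCoef (hp1 : p % (2 * m) = 1) (hA : #A = m) (j : ZMod p) :
    resFun p m A j = ∑ χ : MChar p, resCoef p m A χ * χ j := by
  have hm : (m : ℂ) ≠ 0 := Nat.cast_ne_zero.mpr (ne_zero_of_mod_two_mul_eq_one hp1)
  by_cases hj : IsUnit j
  · obtain ⟨u, rfl⟩ := hj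
    rw [sum_resCoef_mul_apply_units A hp1, sum_sub_distrib, sum_ite_eq', sum_const, hA, resFun,
      dif_pos u.isUnit, IsUnit.unit_of_val_units]
    split_ifs
    · field_simp
      push_cast
      ring
    · field_simp
      ring
  · rw [resFun, dif_neg hj]
    simp [MulChar.map_nonunit _ hj]

theorem sum_norm_resCoef_sq (hp1 : p % (2 * m) = 1) (hA : #A = m) :
    ∑ χ : MChar p, ‖resCoef p m A χ‖ ^ 2 = 1 := by
  have hm : (m : ℂ) ≠ 0 := Nat.cast_ne_zero.mpr (ne_zero_of_mod_two_mul_eq_one hp1)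
  have key : ∑ χ : MChar p, resCoef p m A χ * starRingEnd ℂ (resCoef p m A χ) = 1 :=
    calc ∑ χ : MChar p, resCoef p m A χ * starRingEnd ℂ (resCoef p m A χ)
        = 1 / (m : ℂ) * ∑ B ∈ A, ∑ χ : MChar p, resCoef p m A χ * χ (B.out : ZMod p) := by
          rw [sum_congr rfl fun χ _ => resCoef_mul_conj A χ, ← mul_sum, sum_comm]
      _ = 1 / (m : ℂ) * ∑ B ∈ A, 1 := by
          congr 1
          refine sum_congr rfl fun B hB => ?_
          rw [← resFun_eq_sum_resCoef A hp1 hA, resFun_out_of_mem A hB]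
      _ = 1 := by
          rw [sum_const, hA, nsmul_one]
          field_simp
  simp only [Complex.mul_conj, Complex.normSq_eq_norm_sq] at key
  exact_mod_cast key

end ResidueClasses

theorem residue_class_is_char_combo_general
    (m p : ℕ) [Fact p.Prime] (hp1 : p % (2 * m) = 1)
    (A : Finset (ResCosets p m)) (hA : A.card = m) :
    (∀ j : ZMod p, resFun p m A j = ∑ χ : MChar p, resCoef p m A χ * χ j) ∧
    (∑ χ : MChar p, norm (resCoef p m A χ) ^ 2 = 1) ∧
    (∀ χ : MChar p, resCoef p m A χ⁻¹ = (starRingEnd ℂ) (resCoef p m A χ)) :=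
  ⟨resFun_eq_sum_resCoef A hp1 hA, sum_norm_resCoef_sq A hp1 hA, resCoef_inv A⟩

/-- Every `2m`-th residue class sequence is a unimodularizable character combination
sequence: the generating function `F_{p,𝒜}` equals `Σ_χ f_χ χ`, with coefficients `f_χ`
supported on the nontrivial characters of the subgroup of order `2m`, the squared
magnitudes of the coefficients sum to `1`, and `f_{χ̄} = conj(f_χ)`. -/
theorem residue_class_is_char_combo
    (m p : ℕ) (hm : 0 < m) [Fact p.Prime] (hp1 : p % (2 * m) = 1)
    (A : Finset (ResCosets p m)) (hA : A.card = m) :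
    (∀ j : ZMod p, resFun p m A j = ∑ χ : MChar p, resCoef p m A χ * χ j) ∧
    (∑ χ : MChar p, norm (resCoef p m A χ) ^ 2 = 1) ∧
    (∀ χ : MChar p, resCoef p m A χ⁻¹ = (starRingEnd ℂ) (resCoef p m A χ)) :=
  residue_class_is_char_combo_general m p hp1 A hA

end Paper
end
end
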